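/- Let U ⊆ V ⊆ R^d be submodules and ≺ a monomial order on R^d. A finite set H ⊆ V∖U whose elements are supported on module monomials outside lm(U) is a Gröbner basis of V relative to U if and only if the set {h + U : h ∈ H} is a Gröbner basis of the quotient module V/U ⊆ R^d/U, i.e., {h + U : h ∈ H} generates V/U and for every module monomial m ∈ lm(V/U) there exists h ∈ H such that lm(h + U) divides m. -/

import Mathlib

attribute [local instance] Classical.propDecidable

noncomputable section

/-- Module monomial index: an exponent vector together with a component index. -/
abbrev ModMon (n d : ℕ) := (Fin n →₀ ℕ) × Fin d

/-- The free module `R^d` over `R = k[X_1, …, X_n]`. -/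
abbrev FreeMod (k : Type*) [Field k] (n d : ℕ) := Fin d → MvPolynomial (Fin n) k

variable {k : Type*} [Field k] {n d : ℕ}

/-- The module monomial `X^α e_i` as an element of `R^d`. -/
def mmVec (m : ModMon n d) : FreeMod k n d :=
  Pi.single m.2 (MvPolynomial.monomial m.1 (1 : k))

/-- The support of `f ∈ R^d` as a finite set of module monomials. -/
def suppF (f : FreeMod k n d) : Finset (ModMon n d) :=
  (Finset.univ : Finset (Fin d)).biUnion fun i =>
    ((f i).support.image fun a => ((a, i) : ModMon n d))

/-- A monomial order on `R^d`: a well-founded total order on module monomials such that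
`e_i ⪯ X^α e_i` and which is compatible with multiplication by monomials. -/
structure ModMonOrder (n d : ℕ) where
  toOrd : LinearOrder (ModMon n d)
  wf : WellFounded toOrd.lt
  base_le : ∀ (i : Fin d) (a : Fin n →₀ ℕ), toOrd.le (0, i) (a, i)
  add_le : ∀ (a b c : Fin n →₀ ℕ) (i j : Fin d),
    toOrd.le (b, i) (c, j) → toOrd.le (a + b, i) (a + c, j)

namespace ModMonOrder

variable (ord : ModMonOrder n d)

/-- The leading monomial of `f` (`⊥` if `f = 0`). -/
def lmo (f : FreeMod k n d) : WithBot (ModMon n d) :=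
  letI := ord.toOrd
  (suppF f).max

/-- The order on leading monomials, extended to `WithBot` (with `⊥` smallest). -/
def leB (x y : WithBot (ModMon n d)) : Prop :=
  WithBot.recBotCoe True
    (fun a => WithBot.recBotCoe False (fun b => ord.toOrd.le a b) y) x

/-- The leading coefficient of `f` (`0` if `f = 0`). -/
def lc (f : FreeMod k n d) : k :=
  WithBot.recBotCoe 0 (fun m => (f m.2).coeff m.1) (ord.lmo f)

/-- The leading monomial of `f`, as an element of `R^d` (`0` if `f = 0`). -/
def lmVec (f : FreeMod k n d) : FreeMod k n d :=
  WithBot.recBotCoe 0 (fun m => mmVec m) (ord.lmo f)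

/-- `lm(W)`: the submodule generated by the leading monomials of nonzero elements of `W`. -/
def lmSub (W : Submodule (MvPolynomial (Fin n) k) (FreeMod k n d)) :
    Submodule (MvPolynomial (Fin n) k) (FreeMod k n d) :=
  Submodule.span (MvPolynomial (Fin n) k) {v | ∃ f ∈ W, f ≠ 0 ∧ v = ord.lmVec f}

end ModMonOrder

/-- Divisibility in `R^d`: `u` divides `v` iff `v = p • u` for some polynomial `p`. -/
def dvdV (u v : FreeMod k n d) : Prop := ∃ p : MvPolynomial (Fin n) k, v = p • u

/-- `G` is a Gröbner basis of the submodule `W ⊆ R^d`. -/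
def IsGB (ord : ModMonOrder n d) (W : Submodule (MvPolynomial (Fin n) k) (FreeMod k n d))
    (G : Finset (FreeMod k n d)) : Prop :=
  Submodule.span (MvPolynomial (Fin n) k) (G : Set (FreeMod k n d)) = W ∧
  Submodule.span (MvPolynomial (Fin n) k) (ord.lmVec '' (G : Set (FreeMod k n d))) = ord.lmSub W

/-- `G` is the reduced Gröbner basis of `W ⊆ R^d`. -/
def IsRedGB (ord : ModMonOrder n d) (W : Submodule (MvPolynomial (Fin n) k) (FreeMod k n d))
    (G : Finset (FreeMod k n d)) : Prop :=
  IsGB ord W G ∧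
  (∀ g ∈ G, ∀ g' ∈ G, g ≠ g' → ¬ dvdV (ord.lmVec g) (ord.lmVec g')) ∧
  ∀ g ∈ G, ord.lc g = 1 ∧ ∀ m ∈ suppF (g - ord.lmVec g), mmVec m ∉ ord.lmSub W

/-- `p` is a normal form of `f` modulo `U`: `f - p ∈ U` and `p` is supported on
module monomials outside `lm(U)`. -/
def IsNF (ord : ModMonOrder n d) (U : Submodule (MvPolynomial (Fin n) k) (FreeMod k n d))
    (f p : FreeMod k n d) : Prop :=
  f - p ∈ U ∧ ∀ m ∈ suppF p, mmVec m ∉ ord.lmSub U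

/-- `H` is a Gröbner basis of `V` relative to `U`. -/
def IsRelGB (ord : ModMonOrder n d) (U V : Submodule (MvPolynomial (Fin n) k) (FreeMod k n d))
    (H : Finset (FreeMod k n d)) : Prop :=
  (H : Set (FreeMod k n d)) ⊆ (V : Set (FreeMod k n d)) \ (U : Set (FreeMod k n d)) ∧
  (∀ h ∈ H, ∀ m ∈ suppF h, mmVec m ∉ ord.lmSub U) ∧
  Submodule.span (MvPolynomial (Fin n) k) (ord.lmVec '' (H : Set (FreeMod k n d))) ⊔ ord.lmSub U
    = ord.lmSub V

/-- `H` is a minimal Gröbner basis of `V` relative to `U`. -/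
def IsMinRelGB (ord : ModMonOrder n d) (U V : Submodule (MvPolynomial (Fin n) k) (FreeMod k n d))
    (H : Finset (FreeMod k n d)) : Prop :=
  IsRelGB ord U V H ∧
  ∀ h ∈ H, ∀ h' ∈ H, h ≠ h' → ¬ dvdV (ord.lmVec h) (ord.lmVec h')

/-- `H` is the reduced Gröbner basis of `V` relative to `U`. -/
def IsRedRelGB (ord : ModMonOrder n d) (U V : Submodule (MvPolynomial (Fin n) k) (FreeMod k n d))
    (H : Finset (FreeMod k n d)) : Prop :=
  IsMinRelGB ord U V H ∧
  ∀ h ∈ H, ord.lc h = 1 ∧ ∀ m ∈ suppF (h - ord.lmVec h), mmVec m ∉ ord.lmSub V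

end

/-!
Splitting `f ∈ V ∖ U` as `(f - NF f) + NF f`, the two summands have distinct leading monomials,
one in `lm(U)` and one outside it, so `lm(V) = lm(V/U) + lm(U)`. Since every `h ∈ H` is its own
normal form, the relative condition `⟨lm H⟩ + lm(U) = lm(V)` thus amounts to every monomial of
`lm(V/U)` being divisible by some `lm(h)`; a divisor from `lm(U)` cannot occur because normal
forms avoid `lm(U)`. Generation of `V/U` follows from the relative condition by the division
algorithm, which upgrades `lm(V) ⊆ lm(⟨H⟩ + U)` to `V = ⟨H⟩ + U`.
-/

section Support

variable {k : Type*} [Field k] {n d : ℕ}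

open MvPolynomial

theorem mem_suppF_iff {f : FreeMod k n d} {m : ModMon n d} :
    m ∈ suppF f ↔ (f m.2).coeff m.1 ≠ 0 := by
  simp only [suppF, Finset.mem_biUnion, Finset.mem_univ, true_and, Finset.mem_image,
    mem_support_iff]
  exact ⟨by rintro ⟨i, a, ha, rfl⟩; exact ha, fun h => ⟨m.2, m.1, h, rfl⟩⟩

theorem suppF_eq_empty_iff {f : FreeMod k n d} : suppF f = ∅ ↔ f = 0 := by
  refine ⟨fun h => ?_, by rintro rfl; ext m; simp [mem_suppF_iff]⟩
  funext i; ext a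
  simpa [mem_suppF_iff] using Finset.eq_empty_iff_forall_notMem.1 h (a, i)

theorem suppF_add_subset (x y : FreeMod k n d) : suppF (x + y) ⊆ suppF x ∪ suppF y := by
  intro m hm
  rw [Finset.mem_union, mem_suppF_iff, mem_suppF_iff]
  rw [mem_suppF_iff, Pi.add_apply, coeff_add] at hm
  by_contra! h
  simp [h.1, h.2] at hm

theorem suppF_sub_subset (x y : FreeMod k n d) : suppF (x - y) ⊆ suppF x ∪ suppF y := by
  intro m hm
  rw [Finset.mem_union, mem_suppF_iff, mem_suppF_iff]
  rw [mem_suppF_iff, Pi.sub_apply, coeff_sub] at hm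
  by_contra! h
  simp [h.1, h.2] at hm

theorem suppF_mmVec (μ : ModMon n d) : suppF (mmVec μ : FreeMod k n d) = {μ} := by
  ext ⟨a, i⟩
  obtain ⟨b, j⟩ := μ
  rw [mem_suppF_iff, Finset.mem_singleton, mmVec]
  by_cases h : i = j
  · subst h
    simp [coeff_monomial, eq_comm]
  · simp [h]

theorem mem_suppF_mmVec_self (μ : ModMon n d) : μ ∈ suppF (mmVec μ : FreeMod k n d) := by
  simp [suppF_mmVec]

theorem exists_le_of_mem_suppF_smul {p : MvPolynomial (Fin n) k} {x : FreeMod k n d}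
    {m : ModMon n d} (hm : m ∈ suppF (p • x)) :
    ∃ s ∈ suppF x, s.2 = m.2 ∧ s.1 ≤ m.1 := by
  rw [mem_suppF_iff, Pi.smul_apply, smul_eq_mul] at hm
  obtain ⟨e, -, s, hs, hsum⟩ := Finset.mem_add.1 (support_mul p (x m.2) (mem_support_iff.2 hm))
  exact ⟨(s, m.2), mem_suppF_iff.2 (mem_support_iff.1 hs), rfl, hsum ▸ le_add_self⟩

theorem exists_eq_of_mem_suppF_monomial_smul {a : Fin n →₀ ℕ} {c : k} {g : FreeMod k n d}
    {m : ModMon n d} (hm : m ∈ suppF (monomial a c • g)) :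
    ∃ s ∈ suppF g, m = (a + s.1, s.2) := by
  rw [mem_suppF_iff, Pi.smul_apply, smul_eq_mul, coeff_monomial_mul'] at hm
  split_ifs at hm with h
  · refine ⟨(m.1 - a, m.2), mem_suppF_iff.2 (right_ne_zero_of_mul hm), ?_⟩
    rw [add_tsub_cancel_of_le h]
  · exact absurd rfl hm

theorem mmVec_eq_monomial_smul {ν m : ModMon n d} (h2 : ν.2 = m.2) (h1 : ν.1 ≤ m.1) :
    (mmVec m : FreeMod k n d) = monomial (m.1 - ν.1) (1 : k) • mmVec ν := by
  obtain ⟨b, i⟩ := ν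
  obtain ⟨a, j⟩ := m
  obtain rfl : i = j := h2
  funext l
  by_cases h : l = i
  · subst h
    simp [mmVec, monomial_mul, tsub_add_cancel_of_le h1]
  · simp [mmVec, h]

end Support

theorem Finset.max_eq_of_forall_le {α : Type*} [LinearOrder α] {s : Finset α} {a : α}
    (ha : a ∈ s) (h : ∀ b ∈ s, b ≤ a) : s.max = a :=
  le_antisymm (Finset.max_le fun b hb => WithBot.coe_le_coe.2 (h b hb)) (Finset.le_max ha)

-- `ModMon n d` already carries the product order as an instance, so order lemmas about the
-- monomial order are applied to `ord.toOrd` explicitly.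
namespace ModMonOrder

variable {k : Type*} [Field k] {n d : ℕ} (ord : ModMonOrder n d)

open MvPolynomial Submodule

theorem lmo_zero : ord.lmo (0 : FreeMod k n d) = ⊥ := by
  simp [lmo, suppF_eq_empty_iff.2 rfl]

theorem exists_lmo_eq {f : FreeMod k n d} (hf : f ≠ 0) : ∃ μ : ModMon n d, ord.lmo f = ↑μ :=
  @Finset.max_of_nonempty _ ord.toOrd _
    (Finset.nonempty_iff_ne_empty.2 (mt suppF_eq_empty_iff.1 hf))

theorem mem_suppF_of_lmo_eq {f : FreeMod k n d} {μ : ModMon n d} (h : ord.lmo f = ↑μ) :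
    μ ∈ suppF f :=
  @Finset.mem_of_max _ ord.toOrd _ _ h

theorem le_of_lmo_eq {f : FreeMod k n d} {μ m : ModMon n d} (h : ord.lmo f = ↑μ)
    (hm : m ∈ suppF f) : ord.toOrd.le m μ :=
  @Finset.le_max_of_eq _ ord.toOrd _ _ _ hm h

theorem lmo_eq_of_forall_le {f : FreeMod k n d} {μ : ModMon n d} (hμ : μ ∈ suppF f)
    (h : ∀ m ∈ suppF f, ord.toOrd.le m μ) : ord.lmo f = ↑μ :=
  @Finset.max_eq_of_forall_le _ ord.toOrd _ _ hμ h

theorem lmVec_of_lmo_eq {f : FreeMod k n d} {μ : ModMon n d} (h : ord.lmo f = ↑μ) :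
    ord.lmVec f = mmVec μ := by
  rw [lmVec, h]; rfl

theorem lc_of_lmo_eq {f : FreeMod k n d} {μ : ModMon n d} (h : ord.lmo f = ↑μ) :
    ord.lc f = (f μ.2).coeff μ.1 := by
  rw [lc, h]; rfl

theorem lmVec_zero : ord.lmVec (0 : FreeMod k n d) = 0 := by
  rw [lmVec, lmo_zero]; rfl

theorem lmo_add_of_forall_lt {x y : FreeMod k n d} {ν : ModMon n d} (hy : ord.lmo y = ↑ν)
    (hx : ∀ m ∈ suppF x, ord.toOrd.lt m ν) : ord.lmo (x + y) = ↑ν := by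
  have hν : ν ∈ suppF (x + y) := by
    have hxν : (x ν.2).coeff ν.1 = 0 := by
      by_contra h
      exact @lt_irrefl _ ord.toOrd.toPreorder ν (hx ν (mem_suppF_iff.2 h))
    rw [mem_suppF_iff, Pi.add_apply, coeff_add, hxν, zero_add]
    exact mem_suppF_iff.1 (ord.mem_suppF_of_lmo_eq hy)
  refine ord.lmo_eq_of_forall_le hν fun m hm => ?_
  rcases Finset.mem_union.1 (suppF_add_subset x y hm) with h | h
  · exact @le_of_lt _ ord.toOrd.toPreorder _ _ (hx m h)
  · exact ord.le_of_lmo_eq hy h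

theorem lmVec_add_eq_or {x y : FreeMod k n d} (hxy : ord.lmVec x ≠ ord.lmVec y) :
    ord.lmVec (x + y) = ord.lmVec x ∨ ord.lmVec (x + y) = ord.lmVec y := by
  rcases eq_or_ne x 0 with rfl | hx
  · simp
  rcases eq_or_ne y 0 with rfl | hy
  · simp
  obtain ⟨μ, hμ⟩ := ord.exists_lmo_eq hx
  obtain ⟨ν, hν⟩ := ord.exists_lmo_eq hy
  rw [ord.lmVec_of_lmo_eq hμ, ord.lmVec_of_lmo_eq hν]
  rcases @lt_trichotomy _ ord.toOrd μ ν with hlt | rfl | hlt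
  · right
    exact ord.lmVec_of_lmo_eq (ord.lmo_add_of_forall_lt hν fun m hm =>
      @lt_of_le_of_lt _ ord.toOrd.toPreorder _ _ _ (ord.le_of_lmo_eq hμ hm) hlt)
  · exact absurd (by rw [ord.lmVec_of_lmo_eq hμ, ord.lmVec_of_lmo_eq hν]) hxy
  · left
    rw [add_comm]
    exact ord.lmVec_of_lmo_eq (ord.lmo_add_of_forall_lt hμ fun m hm =>
      @lt_of_le_of_lt _ ord.toOrd.toPreorder _ _ _ (ord.le_of_lmo_eq hν hm) hlt)

theorem suppF_sub_monomial_smul_lt {f g : FreeMod k n d} {μ ν : ModMon n d}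
    (hf : ord.lmo f = ↑μ) (hg : ord.lmo g = ↑ν) (h2 : ν.2 = μ.2) (h1 : ν.1 ≤ μ.1) :
    ∀ m ∈ suppF (f - monomial (μ.1 - ν.1) (ord.lc f / ord.lc g) • g),
      ord.toOrd.lt m μ := by
  have hgν : (g ν.2).coeff ν.1 ≠ 0 := mem_suppF_iff.1 (ord.mem_suppF_of_lmo_eq hg)
  have hadd : μ.1 - ν.1 + ν.1 = μ.1 := tsub_add_cancel_of_le h1
  have hμ : ((f - monomial (μ.1 - ν.1) (ord.lc f / ord.lc g) • g) μ.2).coeff μ.1 = 0 := by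
    have hsmul : ((monomial (μ.1 - ν.1) (ord.lc f / ord.lc g) • g) μ.2).coeff μ.1
        = ord.lc f / ord.lc g * (g ν.2).coeff ν.1 := by
      rw [Pi.smul_apply, smul_eq_mul, ← h2, ← coeff_monomial_mul ν.1 (μ.1 - ν.1), hadd]
    rw [Pi.sub_apply, coeff_sub, hsmul, ord.lc_of_lmo_eq hg, div_mul_cancel₀ _ hgν,
      ord.lc_of_lmo_eq hf, sub_self]
  intro m hm
  refine @lt_of_le_of_ne _ ord.toOrd.toPartialOrder _ _ ?_ fun h => mem_suppF_iff.1 (h ▸ hm) hμ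
  rcases Finset.mem_union.1 (suppF_sub_subset _ _ hm) with h | h
  · exact ord.le_of_lmo_eq hf h
  · obtain ⟨s, hs, rfl⟩ := exists_eq_of_mem_suppF_monomial_smul h
    have := ord.add_le (μ.1 - ν.1) s.1 ν.1 s.2 ν.2 (ord.le_of_lmo_eq hg hs)
    rwa [hadd, h2] at this

theorem lmVec_mem_lmSub {W : Submodule (MvPolynomial (Fin n) k) (FreeMod k n d)}
    {f : FreeMod k n d} (hf : f ∈ W) : ord.lmVec f ∈ ord.lmSub W := by
  rcases eq_or_ne f 0 with rfl | h0
  · rw [lmVec_zero]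
    exact zero_mem _
  · exact subset_span ⟨f, hf, h0, rfl⟩

theorem lmSub_eq_span_image (W : Submodule (MvPolynomial (Fin n) k) (FreeMod k n d)) :
    ord.lmSub W = span (MvPolynomial (Fin n) k) (ord.lmVec '' (W : Set (FreeMod k n d))) :=
  le_antisymm (span_mono fun _ ⟨f, hf, _, hv⟩ => ⟨f, hf, hv.symm⟩)
    (span_le.2 fun _ ⟨_, hf, hv⟩ => hv ▸ ord.lmVec_mem_lmSub hf)

theorem lmSub_mono {W W' : Submodule (MvPolynomial (Fin n) k) (FreeMod k n d)} (h : W ≤ W') :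
    ord.lmSub W ≤ ord.lmSub W' := by
  rw [lmSub_eq_span_image, lmSub_eq_span_image]
  exact span_mono (Set.image_mono h)

theorem exists_lmo_dvd_of_mem_span_lmVec {S : Set (FreeMod k n d)} {f : FreeMod k n d}
    (hf : f ∈ span (MvPolynomial (Fin n) k) (ord.lmVec '' S)) {m : ModMon n d}
    (hm : m ∈ suppF f) :
    ∃ g ∈ S, ∃ ν : ModMon n d, ord.lmo g = ↑ν ∧ ν.2 = m.2 ∧ ν.1 ≤ m.1 := by
  induction hf using span_induction generalizing m with
  | mem _ hx =>
    obtain ⟨g, hg, rfl⟩ := hx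
    rcases eq_or_ne g 0 with rfl | h0
    · simp [lmVec_zero, suppF_eq_empty_iff.2] at hm
    obtain ⟨ν, hν⟩ := ord.exists_lmo_eq h0
    rw [ord.lmVec_of_lmo_eq hν, suppF_mmVec, Finset.mem_singleton] at hm
    exact ⟨g, hg, ν, hν, by rw [hm], by rw [hm]⟩
  | zero => simp [suppF_eq_empty_iff.2] at hm
  | add x y _ _ hx hy =>
    rcases Finset.mem_union.1 (suppF_add_subset x y hm) with h | h
    exacts [hx h, hy h]
  | smul p x _ hx =>
    obtain ⟨s, hs, hs2, hs1⟩ := exists_le_of_mem_suppF_smul hm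
    obtain ⟨g, hg, ν, hν, h2, h1⟩ := hx hs
    exact ⟨g, hg, ν, hν, h2.trans hs2, h1.trans hs1⟩

/-- Division algorithm: an element of `V ∖ W` of least leading monomial could not be reduced. -/
theorem eq_of_le_of_lmSub_le {W V : Submodule (MvPolynomial (Fin n) k) (FreeMod k n d)}
    (hWV : W ≤ V) (h : ord.lmSub V ≤ ord.lmSub W) : W = V := by
  suffices key : ∀ μ : ModMon n d, ∀ f ∈ V, ord.lmo f = ↑μ → f ∈ W by
    refine le_antisymm hWV fun f hf => ?_
    rcases eq_or_ne f 0 with rfl | h0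
    · exact W.zero_mem
    obtain ⟨μ, hμ⟩ := ord.exists_lmo_eq h0
    exact key μ f hf hμ
  intro μ
  induction μ using ord.wf.induction with
  | _ μ IH =>
  intro f hf hfμ
  have hμ :
      mmVec μ ∈ span (MvPolynomial (Fin n) k) (ord.lmVec '' (W : Set (FreeMod k n d))) := by
    rw [← lmSub_eq_span_image, ← ord.lmVec_of_lmo_eq hfμ]
    exact h (ord.lmVec_mem_lmSub hf)
  obtain ⟨g, hg, ν, hgν, h2, h1⟩ :=
    ord.exists_lmo_dvd_of_mem_span_lmVec hμ (mem_suppF_mmVec_self μ)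
  set q := monomial (μ.1 - ν.1) (ord.lc f / ord.lc g) • g
  have hq : q ∈ W := W.smul_mem _ hg
  rw [← sub_add_cancel f q]
  refine W.add_mem ?_ hq
  rcases eq_or_ne (f - q) 0 with h0 | h0
  · rw [h0]
    exact W.zero_mem
  obtain ⟨μ', hμ'⟩ := ord.exists_lmo_eq h0
  exact IH μ' (ord.suppF_sub_monomial_smul_lt hfμ hgν h2 h1 μ' (ord.mem_suppF_of_lmo_eq hμ'))
    _ (V.sub_mem hf (hWV hq)) hμ'

end ModMonOrder

namespace IsNF

variable {k : Type*} [Field k] {n d : ℕ} {ord : ModMonOrder n d}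
  {U V : Submodule (MvPolynomial (Fin n) k) (FreeMod k n d)} {f p : FreeMod k n d}

theorem eq_of_forall_notMem (hp : IsNF ord U f p)
    (hf : ∀ m ∈ suppF f, mmVec m ∉ ord.lmSub U) : p = f := by
  by_contra hne
  obtain ⟨μ, hμ⟩ := ord.exists_lmo_eq (sub_ne_zero.2 (Ne.symm hne))
  have hμU : mmVec μ ∈ ord.lmSub U := ord.lmVec_of_lmo_eq hμ ▸ ord.lmVec_mem_lmSub hp.1
  rcases Finset.mem_union.1 (suppF_sub_subset f p (ord.mem_suppF_of_lmo_eq hμ)) with h | h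
  exacts [hf μ h hμU, hp.2 μ h hμU]

theorem mem (hUV : U ≤ V) (hp : IsNF ord U f p) (hf : f ∈ V) : p ∈ V := by
  simpa using V.sub_mem hf (hUV hp.1)

theorem ne_zero (hp : IsNF ord U f p) (hf : f ∉ U) : p ≠ 0 := by
  rintro rfl
  exact hf (by simpa using hp.1)

theorem lmVec_notMem_lmSub (hp : IsNF ord U f p) (h0 : p ≠ 0) : ord.lmVec p ∉ ord.lmSub U := by
  obtain ⟨μ, hμ⟩ := ord.exists_lmo_eq h0
  rw [ord.lmVec_of_lmo_eq hμ]
  exact hp.2 μ (ord.mem_suppF_of_lmo_eq hμ)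

end IsNF

namespace ModMonOrder

variable {k : Type*} [Field k] {n d : ℕ} (ord : ModMonOrder n d)
  {U V : Submodule (MvPolynomial (Fin n) k) (FreeMod k n d)}

open MvPolynomial Submodule

/-- `lm(V/U)`, where `lm(f + U) = lm(NF(f, U))` and `nf` computes normal forms. -/
noncomputable def lmQuot (U V : Submodule (MvPolynomial (Fin n) k) (FreeMod k n d))
    (nf : FreeMod k n d → FreeMod k n d) : Submodule (MvPolynomial (Fin n) k) (FreeMod k n d) :=
  span (MvPolynomial (Fin n) k) (ord.lmVec '' (nf '' ((V : Set (FreeMod k n d)) \ U)))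

theorem lmQuot_sup_lmSub (hUV : U ≤ V) {nf : FreeMod k n d → FreeMod k n d}
    (hnf : ∀ f, IsNF ord U f (nf f)) : ord.lmQuot U V nf ⊔ ord.lmSub U = ord.lmSub V := by
  refine le_antisymm (sup_le ?_ (ord.lmSub_mono hUV)) ?_
  · refine span_le.2 ?_
    rintro _ ⟨_, ⟨f, ⟨hf, -⟩, rfl⟩, rfl⟩
    exact ord.lmVec_mem_lmSub ((hnf f).mem hUV hf)
  rw [lmSub_eq_span_image, span_le]
  rintro _ ⟨f, hf, rfl⟩
  by_cases hfU : f ∈ U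
  · exact mem_sup_right (ord.lmVec_mem_lmSub hfU)
  have hu : ord.lmVec (f - nf f) ∈ ord.lmSub U := ord.lmVec_mem_lmSub (hnf f).1
  have hne : ord.lmVec (f - nf f) ≠ ord.lmVec (nf f) := fun h =>
    (hnf f).lmVec_notMem_lmSub ((hnf f).ne_zero hfU) (h ▸ hu)
  rcases ord.lmVec_add_eq_or hne with h | h <;> rw [sub_add_cancel] at h <;> rw [h]
  · exact mem_sup_right hu
  · exact mem_sup_left (subset_span ⟨nf f, ⟨f, ⟨hf, hfU⟩, rfl⟩, rfl⟩)

theorem span_sup_eq_of_lmSub (hUV : U ≤ V) {H : Set (FreeMod k n d)}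
    (hHV : H ⊆ V)
    (h : span (MvPolynomial (Fin n) k) (ord.lmVec '' H) ⊔ ord.lmSub U = ord.lmSub V) :
    span (MvPolynomial (Fin n) k) H ⊔ U = V := by
  refine ord.eq_of_le_of_lmSub_le (sup_le (span_le.2 hHV) hUV) (h ▸ sup_le ?_ ?_)
  · refine span_le.2 ?_
    rintro _ ⟨g, hg, rfl⟩
    exact ord.lmVec_mem_lmSub (mem_sup_left (subset_span hg))
  · exact ord.lmSub_mono le_sup_right

theorem exists_lmVec_dvd_of_mem_lmQuot {nf : FreeMod k n d → FreeMod k n d}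
    (hnf : ∀ f, IsNF ord U f (nf f)) {H : Set (FreeMod k n d)}
    (hH : ord.lmQuot U V nf ≤ span (MvPolynomial (Fin n) k) (ord.lmVec '' H) ⊔ ord.lmSub U)
    {m : ModMon n d} (hm : mmVec m ∈ ord.lmQuot U V nf) :
    ∃ h ∈ H, dvdV (ord.lmVec h) (mmVec m) := by
  obtain ⟨_, ⟨f, hf, rfl⟩, ν, hν, h2, h1⟩ :=
    ord.exists_lmo_dvd_of_mem_span_lmVec hm (mem_suppF_mmVec_self m)
  have hνHU : mmVec ν ∈ span (MvPolynomial (Fin n) k) (ord.lmVec '' (H ∪ U)) := by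
    rw [Set.image_union, span_union, ← lmSub_eq_span_image, ← ord.lmVec_of_lmo_eq hν]
    exact hH (subset_span ⟨nf f, ⟨f, hf, rfl⟩, rfl⟩)
  obtain ⟨g, hg, ν', hν', h2', h1'⟩ :=
    ord.exists_lmo_dvd_of_mem_span_lmVec hνHU (mem_suppF_mmVec_self ν)
  rcases hg with hgH | hgU
  · refine ⟨g, hgH, monomial (m.1 - ν'.1) 1, ?_⟩
    rw [ord.lmVec_of_lmo_eq hν']
    exact mmVec_eq_monomial_smul (h2'.trans h2) (h1'.trans h1)
  -- `lm(NF f)` is supported outside `lm(U)`, so no leading monomial of `U` divides it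
  refine absurd ?_ ((hnf f).2 ν (ord.mem_suppF_of_lmo_eq hν))
  rw [mmVec_eq_monomial_smul h2' h1', ← ord.lmVec_of_lmo_eq hν']
  exact smul_mem _ _ (ord.lmVec_mem_lmSub hgU)

theorem span_lmVec_le_of_forall_dvd {S T : Set (FreeMod k n d)}
    (h : ∀ m : ModMon n d, mmVec m ∈ span (MvPolynomial (Fin n) k) (ord.lmVec '' S) →
      ∃ g ∈ T, dvdV (ord.lmVec g) (mmVec m)) :
    span (MvPolynomial (Fin n) k) (ord.lmVec '' S) ≤
      span (MvPolynomial (Fin n) k) (ord.lmVec '' T) := by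
  refine span_le.2 ?_
  rintro _ ⟨f, hf, rfl⟩
  rcases eq_or_ne f 0 with rfl | h0
  · rw [ord.lmVec_zero]
    exact zero_mem _
  obtain ⟨μ, hμ⟩ := ord.exists_lmo_eq h0
  obtain ⟨g, hg, p, hp⟩ := h μ (subset_span ⟨f, hf, ord.lmVec_of_lmo_eq hμ⟩)
  rw [ord.lmVec_of_lmo_eq hμ, hp]
  exact smul_mem _ _ (subset_span ⟨g, hg, rfl⟩)

end ModMonOrder

/-- A finite set `H ⊆ V ∖ U` supported on module monomials outside `lm(U)` is a Gröbner
basis of `V` relative to `U` iff `{h + U : h ∈ H}` is a Gröbner basis of the quotient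
`V/U ⊆ R^d/U`: it generates `V/U` and for every module monomial `m ∈ lm(V/U)` there is
`h ∈ H` with `lm(h + U) ∣ m`.  Here `lm(f + U) = lm(NF(f, U))`. -/
theorem relative_groebner_basis_iff_quotient_groebner_basis
    {k : Type*} [Field k] {n d : ℕ}
    (ord : ModMonOrder n d)
    (U V : Submodule (MvPolynomial (Fin n) k) (FreeMod k n d))
    (hUV : U ≤ V)
    (nf : FreeMod k n d → FreeMod k n d)
    (hnf : ∀ f, IsNF ord U f (nf f))
    (H : Finset (FreeMod k n d))
    (hHVU : (H : Set (FreeMod k n d)) ⊆ (V : Set (FreeMod k n d)) \ (U : Set (FreeMod k n d)))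
    (hHsupp : ∀ h ∈ H, ∀ m ∈ suppF h, mmVec m ∉ ord.lmSub U) :
    IsRelGB ord U V H ↔
      (Submodule.span (MvPolynomial (Fin n) k) (U.mkQ '' (H : Set (FreeMod k n d)))
          = V.map U.mkQ ∧
        ∀ m : ModMon n d,
          mmVec m ∈ Submodule.span (MvPolynomial (Fin n) k)
            {v : FreeMod k n d | ∃ f ∈ V, f ∉ U ∧ v = ord.lmVec (nf f)} →
          ∃ h ∈ H, dvdV (ord.lmVec (nf h)) (mmVec m)) := by
  have hnfH : ∀ h ∈ H, nf h = h := fun h hh => (hnf h).eq_of_forall_notMem (hHsupp h hh)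
  have hL : Submodule.span (MvPolynomial (Fin n) k)
      {v : FreeMod k n d | ∃ f ∈ V, f ∉ U ∧ v = ord.lmVec (nf f)} = ord.lmQuot U V nf := by
    congr 1
    ext v
    simp [eq_comm, and_assoc]
  have hHquot : Submodule.span (MvPolynomial (Fin n) k) (ord.lmVec '' (H : Set (FreeMod k n d)))
      ≤ ord.lmQuot U V nf :=
    Submodule.span_mono (Set.image_mono fun h hh => ⟨h, hHVU hh, hnfH h hh⟩)
  rw [IsRelGB, ← ord.lmQuot_sup_lmSub hUV hnf, hL]
  constructor
  · rintro ⟨-, -, hA⟩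
    have hspan := ord.span_sup_eq_of_lmSub hUV (fun h hh => (hHVU hh).1)
      (hA.trans (ord.lmQuot_sup_lmSub hUV hnf))
    refine ⟨?_, fun m hm => ?_⟩
    · rw [← Submodule.map_span, ← hspan, Submodule.map_sup, Submodule.mkQ_map_self, sup_bot_eq]
    · obtain ⟨h, hh, hdvd⟩ :=
        ord.exists_lmVec_dvd_of_mem_lmQuot hnf (hA.symm ▸ le_sup_left) hm
      exact ⟨h, hh, by rwa [hnfH h hh]⟩
  · rintro ⟨-, hdvd⟩
    refine ⟨hHVU, hHsupp, le_antisymm (sup_le_sup_right hHquot _) (sup_le_sup_right ?_ _)⟩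
    refine ord.span_lmVec_le_of_forall_dvd fun m hm => ?_
    obtain ⟨h, hh, hd⟩ := hdvd m hm
    exact ⟨h, hh, by rwa [hnfH h hh] at hd⟩
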